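/- arXiv:2405.07224 — 2 statements merged into one kernel-verified Lean document; each statement's English description precedes it below -/
import Mathlib

section
/- A finite game admits an exact potential in the sense of Monderer–Shapley if and only if its effective payoff field is exact, i.e., there exists a function φ : A → ℝ whose multilinear extension Φ satisfies ṽ_{i,k}(x) = ∂Φ̃/∂x̃_{i,k}(x̃) for all players i, all k = 1,…,m_i, and all mixed profiles, where Φ̃ is the effective (reduced-coordinate) representation of Φ. -/
open Finset

noncomputable section

def mixedPayoff {ι : Type*} [Fintype ι] [DecidableEq ι]
    {A : ι → Type*} [∀ i, Fintype (A i)]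
    (u : ι → (∀ j, A j) → ℝ) (i : ι) (x : ∀ j, A j → ℝ) : ℝ :=
  ∑ α : ∀ j, A j, u i α * ∏ j, x j (α j)

def unilateralPayoff {ι : Type*} [Fintype ι] [DecidableEq ι]
    {A : ι → Type*} [∀ i, Fintype (A i)] [∀ i, DecidableEq (A i)]
    (u : ι → (∀ j, A j) → ℝ) (i : ι) (a : A i) (x : ∀ j, A j → ℝ) : ℝ :=
  mixedPayoff u i (Function.update x i (fun b => if b = a then 1 else 0))

section Aux

variable {ι : Type*} [Fintype ι] [DecidableEq ι]
    {A : ι → Type*} [∀ i, Fintype (A i)] [∀ i, DecidableEq (A i)]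

omit [DecidableEq ι] [(i : ι) → Fintype (A i)] in
lemma prod_dirac_aux (β γ : ∀ j, A j) :
    (∏ j, (if β j = γ j then (1:ℝ) else 0)) = if β = γ then 1 else 0 := by
  by_cases h : β = γ
  · simp [h]
  · obtain ⟨j, hj⟩ := Function.ne_iff.mp h
    rw [if_neg h]
    exact Finset.prod_eq_zero (mem_univ j) (if_neg hj)

lemma mixed_dirac_aux (u : ι → (∀ j, A j) → ℝ) (i : ι) (γ : ∀ j, A j) :
    mixedPayoff u i (fun j a => if a = γ j then 1 else 0) = u i γ := by
  unfold mixedPayoff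
  rw [Fintype.sum_eq_single γ]
  · simp [prod_dirac_aux]
  · intro β hβ
    rw [prod_dirac_aux, if_neg hβ, mul_zero]

lemma unilateral_dirac_aux (u : ι → (∀ j, A j) → ℝ) (i : ι) (c : A i) (γ : ∀ j, A j) :
    unilateralPayoff u i c (fun j a => if a = γ j then 1 else 0)
      = u i (Function.update γ i c) := by
  unfold unilateralPayoff
  have : Function.update (fun j a => if a = γ j then (1:ℝ) else 0) i
      (fun b => if b = c then 1 else 0)
      = fun j a => if a = (Function.update γ i c) j then 1 else 0 := by
    funext j a
    by_cases h : j = i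
    · subst h; simp
    · simp [Function.update_of_ne h]
  rw [this, mixed_dirac_aux]

lemma unilateral_formula_aux (u : ι → (∀ j, A j) → ℝ) (i : ι) (a : A i) (x : ∀ j, A j → ℝ) :
    unilateralPayoff u i a x
      = ∑ g : ∀ j : {j // j ≠ i}, A (j : ι),
          u i ((Equiv.piSplitAt i A).symm (a, g)) *
            ∏ j : {j // j ≠ i}, x (j : ι) (g j) := by
  unfold unilateralPayoff mixedPayoff
  set y := Function.update x i (fun b => if b = a then 1 else 0) with hy
  rw [← Equiv.sum_comp (Equiv.piSplitAt i A).symm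
    (fun α => u i α * ∏ j, y j (α j)), Fintype.sum_prod_type]
  have key : ∀ (a' : A i) (g : ∀ j : {j // j ≠ i}, A (j : ι)),
      u i ((Equiv.piSplitAt i A).symm (a', g)) *
          ∏ j, y j ((Equiv.piSplitAt i A).symm (a', g) j)
        = if a' = a then
            u i ((Equiv.piSplitAt i A).symm (a', g)) * ∏ j : {j // j ≠ i}, x (j : ι) (g j)
          else 0 := by
    intro a' g
    rw [Fintype.prod_eq_mul_prod_compl i]
    have h1 : (Equiv.piSplitAt i A).symm (a', g) i = a' := by simp
    have h2 : y i ((Equiv.piSplitAt i A).symm (a', g) i) = if a' = a then 1 else 0 := by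
      rw [h1, hy, Function.update_self]
    have h3 : (∏ j ∈ ({i}ᶜ : Finset ι), y j ((Equiv.piSplitAt i A).symm (a', g) j))
        = ∏ j : {j // j ≠ i}, x (j : ι) (g j) := by
      rw [Finset.prod_subtype (p := fun j => j ≠ i) ({i}ᶜ : Finset ι) (by simp)
        (fun j => y j ((Equiv.piSplitAt i A).symm (a', g) j))]
      refine Finset.prod_congr rfl fun j _ => ?_
      have : (Equiv.piSplitAt i A).symm (a', g) (j : ι) = g j := by
        simp [Equiv.piSplitAt_symm_apply, dif_neg j.2]
      rw [this, hy, Function.update_of_ne j.2]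
    rw [h2, h3]
    by_cases h : a' = a <;> simp [h, mul_comm]
  simp only [key]
  rw [Finset.sum_comm]
  simp

end Aux

/-- **A finite game is an exact potential game (Monderer–Shapley) iff its effective
payoff field is exact.**  Exactness of the effective field: there is `φ : A → ℝ` whose
multilinear extension `Φ` satisfies, at every mixed profile and in every effective
direction, `ṽ_{i,b}(x) = ∂Φ̃/∂x̃_{i,b}(x̃)`; by the chain rule and multilinearity this
reads `u_i(b;x_{-i}) − u_i(0_i;x_{-i}) = Φ(b;x_{-i}) − Φ(0_i;x_{-i})`. -/
theorem exact_potential_iff_effective_field_exact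
    {ι : Type*} [Fintype ι] [DecidableEq ι]
    (A : ι → Type*) [∀ i, Fintype (A i)] [∀ i, DecidableEq (A i)]
    (u : ι → (∀ j, A j) → ℝ) (o : ∀ i, A i) :
    (∃ φ : (∀ j, A j) → ℝ, ∀ (i : ι) (α : ∀ j, A j) (b : A i),
        u i (Function.update α i b) - u i α = φ (Function.update α i b) - φ α)
    ↔ (∃ φ : (∀ j, A j) → ℝ,
        ∀ x : ∀ j, A j → ℝ, (∀ j a, 0 ≤ x j a) → (∀ j, ∑ a, x j a = 1) →
          ∀ (i : ι) (b : A i),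
            unilateralPayoff u i b x - unilateralPayoff u i (o i) x =
              unilateralPayoff (fun _ => φ) i b x -
                unilateralPayoff (fun _ => φ) i (o i) x) := by
  constructor
  · rintro ⟨φ, hφ⟩
    refine ⟨φ, fun x _ _ i b => ?_⟩
    rw [unilateral_formula_aux, unilateral_formula_aux, unilateral_formula_aux,
      unilateral_formula_aux, ← Finset.sum_sub_distrib, ← Finset.sum_sub_distrib]
    refine Finset.sum_congr rfl fun g _ => ?_
    rw [← sub_mul, ← sub_mul]
    congr 1
    set β := (Equiv.piSplitAt i A).symm (o i, g) with hβ
    have hβi : β i = o i := by simp [hβ]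
    have hb : ∀ c : A i, (Equiv.piSplitAt i A).symm (c, g) = Function.update β i c := by
      intro c; funext j
      by_cases h : j = i
      · subst h; simp [hβ]
      · simp [hβ, Equiv.piSplitAt_symm_apply, dif_neg h, Function.update_of_ne h]
    have hself : Function.update β i (o i) = β := by
      rw [← hβi]; exact Function.update_eq_self i β
    rw [hb b]
    exact hφ i β b
  · rintro ⟨φ, hφ⟩
    refine ⟨φ, fun i α b => ?_⟩
    have hx : ∀ j a, (0:ℝ) ≤ (if a = α j then 1 else 0) := by
      intro j a; split <;> norm_num
    have hs : ∀ j, (∑ a, (if a = α j then (1:ℝ) else 0)) = 1 := by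
      intro j; simp
    have key : ∀ c : A i,
        u i (Function.update α i c) - u i (Function.update α i (o i)) =
          φ (Function.update α i c) - φ (Function.update α i (o i)) := by
      intro c
      have := hφ (fun j a => if a = α j then 1 else 0) hx hs i c
      rwa [unilateral_dirac_aux, unilateral_dirac_aux, unilateral_dirac_aux,
        unilateral_dirac_aux] at this
    have h1 := key b
    have h2 := key (α i)
    rw [Function.update_eq_self i α] at h2
    linarith

end
end

section
/- If a finite game is harmonic, then the function H(x) = −∑_{i ∈ N} ∑_{α_i ∈ A_i} log x_{i,α_i} is a constant of motion of the replicator dynamics: along any interior solution trajectory x(t) of ẋ_{i,α_i} = x_{i,α_i}(u_i(α_i; x_{-i}) − u_i(x)), one has dH(x(t))/dt = 0. -/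
open Finset

noncomputable section

/-! Along an interior replicator trajectory `d/dt log x_{i,a} = u_i(a; x_{-i}) − u_i(x)`, so
`dH/dt = −∑_i ∑_a (u_i(a; x_{-i}) − u_i(x))`. Because each `x_i` is a probability vector,
`u_i(a; x_{-i})` is the `x`-expectation of `α ↦ u_i(update α i a)`; hence the sum is the
`x`-expectation of the harmonic defect `∑_i ∑_a (u_i(update α i a) − u_i(α))`, which vanishes
identically. -/

section Profiles

variable {ι : Type*} [Fintype ι] [DecidableEq ι] {A : ι → Type*}

theorem prod_apply_update {M : Type*} [CommMonoid M] (x : ∀ j, A j → M) (α : ∀ j, A j)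
    (i : ι) (c : A i) :
    ∏ j, x j (Function.update α i c j) = x i c * ∏ j ∈ univ \ {i}, x j (α j) := by
  simp only [Function.apply_update x, prod_update_of_mem (mem_univ i)]

theorem prod_update_apply {M : Type*} [CommMonoid M] (x : ∀ j, A j → M) (α : ∀ j, A j)
    (i : ι) (d : A i → M) :
    ∏ j, Function.update x i d j (α j) = d (α i) * ∏ j ∈ univ \ {i}, x j (α j) := by
  simp only [Function.apply_update (fun j (y : A j → M) ↦ y (α j)),
    prod_update_of_mem (mem_univ i)]

variable [∀ i, Fintype (A i)]

theorem Fintype.sum_sum_update {M : Type*} [AddCommMonoid M] (i : ι)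
    (F : (∀ j, A j) → A i → M) :
    ∑ b, ∑ α, F (Function.update α i b) (α i) = ∑ b, ∑ α, F α b := by
  have swap : Function.Involutive fun p : (∀ j, A j) × A i ↦ (Function.update p.1 i p.2, p.1 i) :=
    fun p ↦ by simp
  rw [sum_comm, ← Fintype.sum_prod_type' (fun α b ↦ F (Function.update α i b) (α i)), sum_comm,
    ← Fintype.sum_prod_type' F]
  exact Equiv.sum_comp (swap.toPerm _) fun p ↦ F p.1 p.2

theorem sum_sum_update_mul_prod (x : ∀ j, A j → ℝ) (i : ι) (f : (∀ j, A j) → ℝ) :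
    ∑ b, ∑ α, f (Function.update α i b) * ∏ j, x j (α j)
      = (∑ c, x i c) * ∑ α, f α * ∏ j ∈ univ \ {i}, x j (α j) := by
  have hsplit (α : ∀ j, A j) (b : A i) : ∏ j, x j (α j)
      = x i (α i) * ∏ j ∈ univ \ {i}, x j (Function.update α i b j) := by
    -- `α = update (update α i b) i (α i)`
    conv_lhs => rw [← Function.update_eq_self i α, ← Function.update_idem b (α i) α]
    exact prod_apply_update x _ i (α i)
  let F (β : ∀ j, A j) (c : A i) := f β * (x i c * ∏ j ∈ univ \ {i}, x j (β j))
  calc ∑ b, ∑ α, f (Function.update α i b) * ∏ j, x j (α j)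
      = ∑ b, ∑ α, F (Function.update α i b) (α i) :=
        sum_congr rfl fun b _ ↦ sum_congr rfl fun α _ ↦ by rw [hsplit α b]
    _ = ∑ b, ∑ α, F α b := Fintype.sum_sum_update i F
    _ = (∑ c, x i c) * ∑ α, f α * ∏ j ∈ univ \ {i}, x j (α j) := by
        rw [sum_mul]
        simp only [F, mul_sum]
        exact sum_congr rfl fun _ _ ↦ sum_congr rfl fun _ _ ↦ mul_left_comm _ _ _

end Profiles

section Games

variable {ι : Type*} [Fintype ι] [DecidableEq ι] {A : ι → Type*} [∀ i, Fintype (A i)]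
  [∀ i, DecidableEq (A i)]

def IsHarmonic (u : ι → (∀ j, A j) → ℝ) : Prop :=
  ∀ α : ∀ j, A j, ∑ i, ∑ b : A i, (u i (Function.update α i b) - u i α) = 0

theorem sum_unilateralPayoff (u : ι → (∀ j, A j) → ℝ) (i : ι) (x : ∀ j, A j → ℝ) :
    ∑ b, unilateralPayoff u i b x = ∑ α, u i α * ∏ j ∈ univ \ {i}, x j (α j) := by
  simp only [unilateralPayoff, mixedPayoff, prod_update_apply]
  rw [sum_comm]
  refine sum_congr rfl fun α _ ↦ ?_
  simp

theorem sum_sum_unilateralPayoff_sub_mixedPayoff (u : ι → (∀ j, A j) → ℝ) (x : ∀ j, A j → ℝ)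
    (hx : ∀ j, ∑ a, x j a = 1) :
    ∑ i, ∑ b, (unilateralPayoff u i b x - mixedPayoff u i x)
      = ∑ α, (∑ i, ∑ b, (u i (Function.update α i b) - u i α)) * ∏ j, x j (α j) := by
  have hdev (i : ι) : ∑ b, unilateralPayoff u i b x
      = ∑ b, ∑ α, u i (Function.update α i b) * ∏ j, x j (α j) := by
    rw [sum_unilateralPayoff, sum_sum_update_mul_prod, hx i, one_mul]
  simp only [sum_sub_distrib, hdev, sum_mul, mixedPayoff, sub_mul]
  rw [sum_comm]
  simp_rw [sum_comm (γ := ∀ j, A j)]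

theorem IsHarmonic.sum_sum_unilateralPayoff_sub_mixedPayoff_eq_zero {u : ι → (∀ j, A j) → ℝ}
    (hu : IsHarmonic u) {x : ∀ j, A j → ℝ} (hx : ∀ j, ∑ a, x j a = 1) :
    ∑ i, ∑ b, (unilateralPayoff u i b x - mixedPayoff u i x) = 0 := by
  simp only [sum_sum_unilateralPayoff_sub_mixedPayoff u x hx, hu _, zero_mul, sum_const_zero]

end Games

theorem HasDerivAt.log_of_self_mul {f : ℝ → ℝ} {g t : ℝ} (hf : HasDerivAt f (f t * g) t)
    (ht : f t ≠ 0) : HasDerivAt (fun s ↦ Real.log (f s)) g t := by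
  simpa [ht] using hf.log ht

/-- **Harmonic games admit a constant of motion for the replicator dynamics**:
if the game is harmonic, then along any interior solution `x(t)` of the replicator
dynamics `ẋ_{i,α_i} = x_{i,α_i}(u_i(α_i;x_{-i}) − u_i(x))`, the function
`H(x) = −∑_i ∑_{α_i} log x_{i,α_i}` has zero time derivative. -/
theorem harmonic_constant_of_motion
    {ι : Type*} [Fintype ι] [DecidableEq ι]
    (A : ι → Type*) [∀ i, Fintype (A i)] [∀ i, DecidableEq (A i)]
    (u : ι → (∀ j, A j) → ℝ)
    (harm : ∀ α : ∀ j, A j,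
      ∑ i, ∑ b : A i, (u i (Function.update α i b) - u i α) = 0)
    (x : ℝ → ∀ j, A j → ℝ)
    (hpos : ∀ t j a, 0 < x t j a) (hsum : ∀ t j, ∑ a, x t j a = 1)
    (hode : ∀ t (i : ι) (a : A i),
      HasDerivAt (fun s => x s i a)
        (x t i a * (unilateralPayoff u i a (x t) - mixedPayoff u i (x t))) t)
    (t : ℝ) :
    HasDerivAt (fun s => -∑ i, ∑ a : A i, Real.log (x s i a)) 0 t := by
  have hlog : HasDerivAt (fun s ↦ ∑ i, ∑ a : A i, Real.log (x s i a))
      (∑ i, ∑ a, (unilateralPayoff u i a (x t) - mixedPayoff u i (x t))) t :=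
    HasDerivAt.fun_sum fun i _ ↦ HasDerivAt.fun_sum fun a _ ↦
      (hode t i a).log_of_self_mul (hpos t i a).ne'
  have hH := hlog.neg
  rwa [IsHarmonic.sum_sum_unilateralPayoff_sub_mixedPayoff_eq_zero harm (hsum t), neg_zero] at hH

end
end
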